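/- arXiv:1910.02317 — 2 statements merged into one kernel-verified Lean document; each statement's English description precedes it below -/
import Mathlib

section
/- Let Q_1, …, Q_m be positive definite real n×n matrices, α > 0, and A₀ a real n×n matrix with A₀ Q_j + Q_j A₀ᵀ + 2α Q_j negative semidefinite for every j. Let x, x̂ : ℝ → (Fin n → ℝ) be differentiable with ε(t) = x(t) − x̂(t) satisfying ε'(t) = A₀ ε(t) for all t. Let v_1, …, v_N : ℝ → (Fin n → ℝ) be such that for every t ≥ 0, x̂(t) lies in the convex hull of {v_1(t), …, v_N(t)}. Then for every t ≥ 0 there exists an index i such that ‖x(t)‖_c ≤ ‖v_i(t)‖_c + e^{−αt} ‖x(0) − x̂(0)‖_c. -/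
open Matrix

/-- The composite quadratic Lyapunov function
`V_c(x) = inf_{γ ∈ Δ} xᵀ (∑ j γ_j Q_j)⁻¹ x`, where `Δ` is the standard simplex. -/
noncomputable def compQuad {m n : ℕ} (Q : Fin m → Matrix (Fin n) (Fin n) ℝ)
    (x : Fin n → ℝ) : ℝ :=
  sInf ((fun γ : Fin m → ℝ => x ⬝ᵥ ((∑ j, γ j • Q j)⁻¹).mulVec x) '' stdSimplex ℝ (Fin m))

/-- The composite vector norm `‖x‖_c = √(V_c(x))`. -/
noncomputable def compNorm {m n : ℕ} (Q : Fin m → Matrix (Fin n) (Fin n) ℝ)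
    (x : Fin n → ℝ) : ℝ :=
  Real.sqrt (compQuad Q x)

/-!
For each `γ` in the simplex, `V_γ(x) = xᵀ P_γ⁻¹ x` with `P_γ = ∑ γ_j Q_j` is a quadratic Lyapunov
function for `ε' = A₀ ε`: the LMI is linear in `Q_j`, so it holds for `P_γ`, and conjugating it by
`P_γ⁻¹` gives `V_γ' ≤ -2α V_γ`. Taking the infimum over `γ`, `V_c(ε(t)) ≤ e^{-2αt} V_c(ε(0))`.
The matrix-fractional function `(x, P) ↦ xᵀ P⁻¹ x` is subadditive, which makes `‖·‖_c` a seminorm;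
the triangle inequality `‖x‖_c ≤ ‖x̂‖_c + ‖ε‖_c` and the maximum principle for the convex function
`‖·‖_c` on the convex hull of the `v_i(t)` finish the proof.
-/

namespace Matrix

section Mixture

variable {n ι : Type*} [Fintype ι]

lemma posDef_sum_smul_of_mem_stdSimplex {Q : ι → Matrix n n ℝ} (hQ : ∀ j, (Q j).PosDef)
    {γ : ι → ℝ} (hγ : γ ∈ stdSimplex ℝ ι) : (∑ j, γ j • Q j).PosDef := by
  classical
  obtain ⟨j₀, hj₀⟩ : ∃ j, 0 < γ j := by
    by_contra! h
    have := hγ.2 ▸ Finset.sum_nonpos fun j _ => h j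
    norm_num at this
  rw [← Finset.add_sum_erase _ _ (Finset.mem_univ j₀)]
  exact ((hQ j₀).smul hj₀).add_posSemidef
    (posSemidef_sum _ fun j _ => (hQ j).posSemidef.smul (hγ.1 j))

variable [Fintype n]

lemma posSemidef_neg_lyapunov_sum_smul {A : Matrix n n ℝ} {c : ℝ} {Q : ι → Matrix n n ℝ}
    (hQ : ∀ j, (-(A * Q j + Q j * Aᵀ + c • Q j)).PosSemidef) {γ : ι → ℝ} (hγ : 0 ≤ γ) :
    (-(A * (∑ j, γ j • Q j) + (∑ j, γ j • Q j) * Aᵀ + c • ∑ j, γ j • Q j)).PosSemidef := by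
  have h : -(A * (∑ j, γ j • Q j) + (∑ j, γ j • Q j) * Aᵀ + c • ∑ j, γ j • Q j) =
      ∑ j, γ j • -(A * Q j + Q j * Aᵀ + c • Q j) := by
    simp only [Finset.mul_sum, Finset.sum_mul, Finset.smul_sum, ← Finset.sum_add_distrib,
      ← Finset.sum_neg_distrib, mul_smul_comm, smul_mul_assoc, smul_neg, smul_add, smul_comm c]
  rw [h]
  exact posSemidef_sum _ fun j _ => (hQ j).smul (hγ j)

end Mixture

section QuadraticForm

variable {n : Type*} [Fintype n]

lemma IsSymm.dotProduct_mulVec_comm {P : Matrix n n ℝ} (hP : P.IsSymm) (x y : n → ℝ) :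
    x ⬝ᵥ P *ᵥ y = y ⬝ᵥ P *ᵥ x := by
  conv_lhs => rw [← hP.eq]
  exact dotProduct_transpose_mulVec P x y

lemma PosSemidef.two_mul_dotProduct_sub_le {P : Matrix n n ℝ} (hP : P.PosSemidef)
    (y z : n → ℝ) : 2 * ((P *ᵥ z) ⬝ᵥ y) - y ⬝ᵥ P *ᵥ y ≤ z ⬝ᵥ P *ᵥ z := by
  have hsymm : P.IsSymm := isHermitian_iff_isSymm.1 hP.isHermitian
  have h := hP.dotProduct_mulVec_nonneg (y - z)
  rw [star_trivial, mulVec_sub, dotProduct_sub, sub_dotProduct, sub_dotProduct,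
    hsymm.dotProduct_mulVec_comm z y] at h
  rw [dotProduct_comm]
  linarith

variable [DecidableEq n]

lemma PosDef.mulVec_inv_mulVec {P : Matrix n n ℝ} (hP : P.PosDef) (x : n → ℝ) :
    P *ᵥ (P⁻¹ *ᵥ x) = x := by
  rw [mulVec_mulVec, mul_nonsing_inv P (isUnit_iff_isUnit_det P |>.1 hP.isUnit), one_mulVec]

lemma PosDef.two_mul_dotProduct_sub_le_inv {P : Matrix n n ℝ} (hP : P.PosDef) (x y : n → ℝ) :
    2 * (x ⬝ᵥ y) - y ⬝ᵥ P *ᵥ y ≤ x ⬝ᵥ P⁻¹ *ᵥ x := by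
  have h := hP.posSemidef.two_mul_dotProduct_sub_le y (P⁻¹ *ᵥ x)
  rwa [hP.mulVec_inv_mulVec, dotProduct_comm (P⁻¹ *ᵥ x)] at h

lemma PosDef.inv_smul {P : Matrix n n ℝ} (hP : P.PosDef) {θ : ℝ} (hθ : θ ≠ 0) :
    (θ • P)⁻¹ = θ⁻¹ • P⁻¹ :=
  inv_eq_left_inv <| by
    rw [smul_mul_smul_comm, inv_mul_cancel₀ hθ,
      nonsing_inv_mul _ (isUnit_iff_isUnit_det P |>.1 hP.isUnit), one_smul]

/-- `xᵀ P⁻¹ x` is the supremum over `y` of `2 xᵀy - yᵀPy`, which is jointly linear in `(x, P)`. -/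
lemma PosDef.dotProduct_inv_mulVec_add_le {P₁ P₂ : Matrix n n ℝ} (h₁ : P₁.PosDef)
    (h₂ : P₂.PosDef) (x₁ x₂ : n → ℝ) :
    (x₁ + x₂) ⬝ᵥ (P₁ + P₂)⁻¹ *ᵥ (x₁ + x₂) ≤ x₁ ⬝ᵥ P₁⁻¹ *ᵥ x₁ + x₂ ⬝ᵥ P₂⁻¹ *ᵥ x₂ := by
  set y := (P₁ + P₂)⁻¹ *ᵥ (x₁ + x₂)
  have hy : (x₁ + x₂) ⬝ᵥ y = y ⬝ᵥ (P₁ + P₂) *ᵥ y := by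
    rw [(h₁.add h₂).mulVec_inv_mulVec, dotProduct_comm]
  have e₁ := h₁.two_mul_dotProduct_sub_le_inv x₁ y
  have e₂ := h₂.two_mul_dotProduct_sub_le_inv x₂ y
  rw [add_mulVec, dotProduct_add, add_dotProduct] at hy
  rw [add_dotProduct]
  linarith

lemma PosDef.posSemidef_neg_lyapunov_inv {A P : Matrix n n ℝ} {c : ℝ} (hP : P.PosDef)
    (h : (-(A * P + P * Aᵀ + c • P)).PosSemidef) :
    (-(Aᵀ * P⁻¹ + P⁻¹ * A + c • P⁻¹)).PosSemidef := by
  have hdet : IsUnit P.det := isUnit_iff_isUnit_det P |>.1 hP.isUnit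
  have h' := h.mul_mul_conjTranspose_same P⁻¹
  rw [hP.inv.isHermitian.eq] at h'
  convert h' using 1
  simp only [Matrix.mul_neg, Matrix.neg_mul, Matrix.mul_add, Matrix.add_mul, Matrix.mul_smul,
    Matrix.smul_mul, ← Matrix.mul_assoc, nonsing_inv_mul P hdet, Matrix.one_mul]
  simp only [Matrix.mul_assoc, mul_nonsing_inv P hdet, Matrix.mul_one]
  abel

end QuadraticForm

end Matrix

lemma le_exp_mul_of_hasDerivAt_le {f f' : ℝ → ℝ} {c : ℝ} (hf : ∀ s, HasDerivAt f (f' s) s)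
    (hbound : ∀ s, f' s ≤ -c * f s) {t : ℝ} (ht : 0 ≤ t) :
    f t ≤ Real.exp (-c * t) * f 0 := by
  have hg : ∀ s, HasDerivAt (fun s => Real.exp (c * s) * f s)
      (Real.exp (c * s) * c * f s + Real.exp (c * s) * f' s) s := fun s => by
    simpa using ((hasDerivAt_id s).const_mul c).exp.fun_mul (hf s)
  have hanti : Antitone fun s => Real.exp (c * s) * f s :=
    antitone_of_deriv_nonpos (fun s => (hg s).differentiableAt) fun s => by
      rw [(hg s).deriv]
      nlinarith [hbound s, Real.exp_pos (c * s)]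
  have h0 := hanti ht
  simp only [mul_zero, Real.exp_zero, one_mul] at h0
  calc f t = Real.exp (-c * t) * (Real.exp (c * t) * f t) := by
        rw [← mul_assoc, ← Real.exp_add, neg_mul, neg_add_cancel, Real.exp_zero, one_mul]
    _ ≤ Real.exp (-c * t) * f 0 := by gcongr

section Decay

variable {n : Type*} [Fintype n]

lemma hasDerivAt_dotProduct {u v : ℝ → n → ℝ} {u' v' : n → ℝ} {t : ℝ}
    (hu : HasDerivAt u u' t) (hv : HasDerivAt v v' t) :
    HasDerivAt (fun s => u s ⬝ᵥ v s) (u' ⬝ᵥ v t + u t ⬝ᵥ v') t := by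
  have := HasDerivAt.fun_sum (u := Finset.univ) fun i _ =>
    (hasDerivAt_pi.1 hu i).fun_mul (hasDerivAt_pi.1 hv i)
  simpa only [dotProduct, Finset.sum_add_distrib] using this

lemma hasDerivAt_mulVec (M : Matrix n n ℝ) {u : ℝ → n → ℝ} {u' : n → ℝ} {t : ℝ}
    (hu : HasDerivAt u u' t) : HasDerivAt (fun s => M *ᵥ u s) (M *ᵥ u') t :=
  (LinearMap.toContinuousLinearMap (mulVecLin M)).hasFDerivAt.comp_hasDerivAt t hu

lemma dotProduct_mulVec_le_exp_mul {A M : Matrix n n ℝ} {c : ℝ}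
    (hM : (-(Aᵀ * M + M * A + c • M)).PosSemidef) {ε : ℝ → n → ℝ}
    (hε : ∀ s, HasDerivAt ε (A *ᵥ ε s) s) {t : ℝ} (ht : 0 ≤ t) :
    ε t ⬝ᵥ M *ᵥ ε t ≤ Real.exp (-c * t) * (ε 0 ⬝ᵥ M *ᵥ ε 0) := by
  refine le_exp_mul_of_hasDerivAt_le
    (fun s => hasDerivAt_dotProduct (hε s) (hasDerivAt_mulVec M (hε s))) (fun s => ?_) ht
  have h := hM.dotProduct_mulVec_nonneg (ε s)
  simp only [star_trivial, neg_mulVec, add_mulVec, smul_mulVec, dotProduct_neg, dotProduct_add,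
    dotProduct_smul, smul_eq_mul, ← mulVec_mulVec] at h
  rw [dotProduct_transpose_mulVec, dotProduct_comm (M *ᵥ ε s)] at h
  linarith

end Decay

section Composite

variable {m n : ℕ} {Q : Fin m → Matrix (Fin n) (Fin n) ℝ}

lemma dotProduct_inv_sum_smul_mulVec_nonneg (hQ : ∀ j, (Q j).PosDef) {γ : Fin m → ℝ}
    (hγ : γ ∈ stdSimplex ℝ (Fin m)) (x : Fin n → ℝ) :
    0 ≤ x ⬝ᵥ (∑ j, γ j • Q j)⁻¹ *ᵥ x := by
  simpa using (posDef_sum_smul_of_mem_stdSimplex hQ hγ).inv.posSemidef.dotProduct_mulVec_nonneg x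

lemma compQuad_le (hQ : ∀ j, (Q j).PosDef) {γ : Fin m → ℝ} (hγ : γ ∈ stdSimplex ℝ (Fin m))
    (x : Fin n → ℝ) : compQuad Q x ≤ x ⬝ᵥ (∑ j, γ j • Q j)⁻¹ *ᵥ x :=
  csInf_le ⟨0, Set.forall_mem_image.2 fun _ hγ' =>
    dotProduct_inv_sum_smul_mulVec_nonneg hQ hγ' x⟩ ⟨γ, hγ, rfl⟩

lemma le_compQuad (hm : 0 < m) {x : Fin n → ℝ} {c : ℝ}
    (h : ∀ γ ∈ stdSimplex ℝ (Fin m), c ≤ x ⬝ᵥ (∑ j, γ j • Q j)⁻¹ *ᵥ x) : c ≤ compQuad Q x :=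
  le_csInf (Set.Nonempty.image _ ⟨_, single_mem_stdSimplex ℝ ⟨0, hm⟩⟩)
    (Set.forall_mem_image.2 h)

lemma exists_lt_of_compQuad_lt (hm : 0 < m) {x : Fin n → ℝ} {c : ℝ} (h : compQuad Q x < c) :
    ∃ γ ∈ stdSimplex ℝ (Fin m), x ⬝ᵥ (∑ j, γ j • Q j)⁻¹ *ᵥ x < c := by
  by_contra! h'
  exact (le_compQuad hm h').not_gt h

lemma compQuad_smul (Q : Fin m → Matrix (Fin n) (Fin n) ℝ) (c : ℝ) (x : Fin n → ℝ) :
    compQuad Q (c • x) = c ^ 2 * compQuad Q x := by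
  rw [compQuad, compQuad, ← smul_eq_mul, ← Real.sInf_smul_of_nonneg (sq_nonneg c),
    ← Set.image_smul, Set.image_image]
  congr 1
  refine Set.image_congr fun γ _ => ?_
  simp only [mulVec_smul, smul_dotProduct, dotProduct_smul, smul_eq_mul]
  ring

lemma compNorm_smul (Q : Fin m → Matrix (Fin n) (Fin n) ℝ) (c : ℝ) (x : Fin n → ℝ) :
    compNorm Q (c • x) = |c| * compNorm Q x := by
  rw [compNorm, compNorm, compQuad_smul, Real.sqrt_mul (sq_nonneg c), Real.sqrt_sq_eq_abs]

lemma compNorm_add_le_of_lt (hm : 0 < m) (hQ : ∀ j, (Q j).PosDef) {a b : Fin n → ℝ} {s r : ℝ}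
    (ha : compNorm Q a < s) (hb : compNorm Q b < r) : compNorm Q (a + b) ≤ s + r := by
  have hs : 0 < s := (Real.sqrt_nonneg _).trans_lt ha
  have hr : 0 < r := (Real.sqrt_nonneg _).trans_lt hb
  obtain ⟨γ₁, hγ₁, h₁⟩ := exists_lt_of_compQuad_lt hm ((Real.sqrt_lt' hs).1 ha)
  obtain ⟨γ₂, hγ₂, h₂⟩ := exists_lt_of_compQuad_lt hm ((Real.sqrt_lt' hr).1 hb)
  -- the weights minimising `s ^ 2 / θ₁ + r ^ 2 / θ₂` subject to `θ₁ + θ₂ = 1`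
  set θ₁ := s / (s + r)
  set θ₂ := r / (s + r)
  have hθ₁ : 0 < θ₁ := by positivity
  have hθ₂ : 0 < θ₂ := by positivity
  have hθ : θ₁ + θ₂ = 1 := by rw [← add_div, div_self (by positivity)]
  have hγ : θ₁ • γ₁ + θ₂ • γ₂ ∈ stdSimplex ℝ (Fin m) :=
    convex_stdSimplex ℝ (Fin m) hγ₁ hγ₂ hθ₁.le hθ₂.le hθ
  have hP₁ := posDef_sum_smul_of_mem_stdSimplex hQ hγ₁
  have hP₂ := posDef_sum_smul_of_mem_stdSimplex hQ hγ₂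
  have hsum : ∑ j, (θ₁ • γ₁ + θ₂ • γ₂) j • Q j = θ₁ • ∑ j, γ₁ j • Q j + θ₂ • ∑ j, γ₂ j • Q j := by
    simp only [Pi.add_apply, Pi.smul_apply, smul_eq_mul, add_smul, mul_smul, Finset.smul_sum,
      Finset.sum_add_distrib]
  rw [compNorm, Real.sqrt_le_left (by positivity)]
  calc compQuad Q (a + b)
      ≤ (a + b) ⬝ᵥ (θ₁ • ∑ j, γ₁ j • Q j + θ₂ • ∑ j, γ₂ j • Q j)⁻¹ *ᵥ (a + b) :=
        hsum ▸ compQuad_le hQ hγ (a + b)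
    _ ≤ a ⬝ᵥ (θ₁ • ∑ j, γ₁ j • Q j)⁻¹ *ᵥ a + b ⬝ᵥ (θ₂ • ∑ j, γ₂ j • Q j)⁻¹ *ᵥ b :=
        (hP₁.smul hθ₁).dotProduct_inv_mulVec_add_le (hP₂.smul hθ₂) a b
    _ = θ₁⁻¹ * (a ⬝ᵥ (∑ j, γ₁ j • Q j)⁻¹ *ᵥ a) + θ₂⁻¹ * (b ⬝ᵥ (∑ j, γ₂ j • Q j)⁻¹ *ᵥ b) := by
        rw [hP₁.inv_smul hθ₁.ne', hP₂.inv_smul hθ₂.ne', smul_mulVec, smul_mulVec, dotProduct_smul,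
          dotProduct_smul, smul_eq_mul, smul_eq_mul]
    _ ≤ θ₁⁻¹ * s ^ 2 + θ₂⁻¹ * r ^ 2 := by gcongr
    _ = (s + r) ^ 2 := by
        simp only [θ₁, θ₂, inv_div]
        field_simp

lemma compNorm_add_le (hm : 0 < m) (hQ : ∀ j, (Q j).PosDef) (a b : Fin n → ℝ) :
    compNorm Q (a + b) ≤ compNorm Q a + compNorm Q b := by
  refine le_of_forall_pos_le_add fun δ hδ => ?_
  have h := compNorm_add_le_of_lt hm hQ (lt_add_of_pos_right (compNorm Q a) (half_pos hδ))
    (lt_add_of_pos_right (compNorm Q b) (half_pos hδ))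
  linarith

variable (Q) in
noncomputable def compSeminorm (hm : 0 < m) (hQ : ∀ j, (Q j).PosDef) :
    Seminorm ℝ (Fin n → ℝ) :=
  .of (compNorm Q) (compNorm_add_le hm hQ) fun c x => compNorm_smul Q c x

lemma compQuad_le_exp_mul (hm : 0 < m) (hQ : ∀ j, (Q j).PosDef) {A : Matrix (Fin n) (Fin n) ℝ}
    {c : ℝ} (hLMI : ∀ j, (-(A * Q j + Q j * Aᵀ + c • Q j)).PosSemidef) {ε : ℝ → Fin n → ℝ}
    (hε : ∀ s, HasDerivAt ε (A *ᵥ ε s) s) {t : ℝ} (ht : 0 ≤ t) :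
    compQuad Q (ε t) ≤ Real.exp (-c * t) * compQuad Q (ε 0) := by
  rw [← div_le_iff₀' (Real.exp_pos _)]
  refine le_compQuad hm fun γ hγ => ?_
  have hP := posDef_sum_smul_of_mem_stdSimplex hQ hγ
  rw [div_le_iff₀' (Real.exp_pos _)]
  exact (compQuad_le hQ hγ _).trans <| dotProduct_mulVec_le_exp_mul
    (hP.posSemidef_neg_lyapunov_inv (posSemidef_neg_lyapunov_sum_smul hLMI hγ.1)) hε ht

lemma compNorm_le_exp_mul (hm : 0 < m) (hQ : ∀ j, (Q j).PosDef) {A : Matrix (Fin n) (Fin n) ℝ}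
    {α : ℝ} (hLMI : ∀ j, (-(A * Q j + Q j * Aᵀ + (2 * α) • Q j)).PosSemidef)
    {ε : ℝ → Fin n → ℝ} (hε : ∀ s, HasDerivAt ε (A *ᵥ ε s) s) {t : ℝ} (ht : 0 ≤ t) :
    compNorm Q (ε t) ≤ Real.exp (-α * t) * compNorm Q (ε 0) := by
  have h := Real.sqrt_le_sqrt (compQuad_le_exp_mul hm hQ hLMI hε ht)
  have hexp : Real.sqrt (Real.exp (-(2 * α) * t)) = Real.exp (-α * t) := by
    rw [← Real.exp_half]; ring_nf
  rwa [Real.sqrt_mul (Real.exp_pos _).le, hexp] at h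

end Composite

theorem barrier_bound_comp_general (m n N : ℕ) (hm : 0 < m)
    (Q : Fin m → Matrix (Fin n) (Fin n) ℝ) (hQ : ∀ j, (Q j).PosDef)
    (α : ℝ)
    (A₀ : Matrix (Fin n) (Fin n) ℝ)
    (hLMI : ∀ j : Fin m, (-(A₀ * Q j + Q j * A₀ᵀ + (2 * α) • Q j)).PosSemidef)
    (x xhat : ℝ → (Fin n → ℝ))
    (hε : ∀ t : ℝ, HasDerivAt (fun s => x s - xhat s) (A₀.mulVec (x t - xhat t)) t)
    (v : Fin N → ℝ → (Fin n → ℝ))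
    (hhull : ∀ t : ℝ, 0 ≤ t → xhat t ∈ convexHull ℝ (Set.range fun i => v i t)) :
    ∀ t : ℝ, 0 ≤ t → ∃ i : Fin N,
      compNorm Q (x t) ≤ compNorm Q (v i t) +
        Real.exp (-α * t) * compNorm Q (x 0 - xhat 0) := by
  intro t ht
  obtain ⟨_, ⟨i, rfl⟩, hi⟩ :=
    (compSeminorm Q hm hQ).convexOn.exists_ge_of_mem_convexHull (Set.subset_univ _) (hhull t ht)
  refine ⟨i, ?_⟩
  calc compNorm Q (x t) = compNorm Q (xhat t + (x t - xhat t)) := by rw [add_sub_cancel]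
    _ ≤ compNorm Q (xhat t) + compNorm Q (x t - xhat t) := compNorm_add_le hm hQ _ _
    _ ≤ compNorm Q (v i t) + Real.exp (-α * t) * compNorm Q (x 0 - xhat 0) :=
        add_le_add hi (compNorm_le_exp_mul hm hQ hLMI hε ht)

/-- Theorem 2: if the estimation error `ε = x - x̂` obeys `ε' = A₀ ε` with
`A₀ Q_j + Q_j A₀ᵀ + 2α Q_j ⪯ 0` for all `j`, and the estimate `x̂(t)` lies in the convex
hull of the vertices `v_i(t)`, then for every `t ≥ 0` there is a vertex `i` with
`‖x(t)‖_c ≤ ‖v_i(t)‖_c + e^{-αt} ‖x(0) - x̂(0)‖_c`. -/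
theorem barrier_bound_comp (m n N : ℕ) (hm : 0 < m) (hN : 0 < N)
    (Q : Fin m → Matrix (Fin n) (Fin n) ℝ) (hQ : ∀ j, (Q j).PosDef)
    (α : ℝ) (hα : 0 < α)
    (A₀ : Matrix (Fin n) (Fin n) ℝ)
    (hLMI : ∀ j : Fin m, (-(A₀ * Q j + Q j * A₀ᵀ + (2 * α) • Q j)).PosSemidef)
    (x xhat : ℝ → (Fin n → ℝ))
    (hx : Differentiable ℝ x) (hxhat : Differentiable ℝ xhat)
    (hε : ∀ t : ℝ, HasDerivAt (fun s => x s - xhat s) (A₀.mulVec (x t - xhat t)) t)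
    (v : Fin N → ℝ → (Fin n → ℝ))
    (hhull : ∀ t : ℝ, 0 ≤ t → xhat t ∈ convexHull ℝ (Set.range fun i => v i t)) :
    ∀ t : ℝ, 0 ≤ t → ∃ i : Fin N,
      compNorm Q (x t) ≤ compNorm Q (v i t) +
        Real.exp (-α * t) * compNorm Q (x 0 - xhat 0) :=
  barrier_bound_comp_general m n N hm Q hQ α A₀ hLMI x xhat hε v hhull
end

section
/- Let Q be a positive definite real n×n matrix, let α₀ > 0, and let A_1, …, A_N be real n×n matrices such that A_i Q + Q A_iᵀ + 2α₀ Q is negative semidefinite for each i. Let A : ℝ → Matrix (Fin n) (Fin n) ℝ be such that A(t) lies in the convex hull of {A_1, …, A_N} for every t, and let x : ℝ → (Fin n → ℝ) be differentiable with x'(t) = A(t) x(t) for all t. Then ‖x(t)‖_q ≤ e^{−α₀ t} ‖x(0)‖_q for all t ≥ 0; in particular, if ‖x(0)‖_q ≤ 1 then ‖x(t)‖_q ≤ 1 for all t ≥ 0, so the unit ball Ω_q = {x : ‖x‖_q ≤ 1} is forward invariant for the polytopic linear differential inclusion. -/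
/-!
Along a trajectory, `V(t) = x(t)ᵀ Q⁻¹ x(t)` satisfies `V' = 2 xᵀ Q⁻¹ A(t) x`. Substituting
`x = Q z` turns each vertex LMI into `xᵀ Q⁻¹ A_i x ≤ -α₀ V`; this inequality is linear in the
matrix, so it passes to every `A(t)` in the convex hull. Hence `V' ≤ -2α₀ V`, Grönwall gives
`V(t) ≤ e^{-2α₀ t} V(0)`, and taking square roots gives the bound on `‖x(t)‖_q`.
-/

open Matrix

/-- The vector norm `‖x‖_q = √(xᵀ Q⁻¹ x)` associated to a positive definite matrix `Q`. -/
noncomputable def quadNorm {n : ℕ} (Q : Matrix (Fin n) (Fin n) ℝ) (x : Fin n → ℝ) : ℝ :=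
  Real.sqrt (x ⬝ᵥ Q⁻¹.mulVec x)

open Filter Topology

section

variable {ι m : Type*} [Fintype ι]

theorem HasDerivAt.dotProduct {u w : ℝ → ι → ℝ} {u' w' : ι → ℝ} {t : ℝ}
    (hu : HasDerivAt u u' t) (hw : HasDerivAt w w' t) :
    HasDerivAt (fun s => u s ⬝ᵥ w s) (u' ⬝ᵥ w t + u t ⬝ᵥ w') t := by
  have h := HasDerivAt.fun_sum (u := Finset.univ) fun i _ =>
    (hasDerivAt_pi.1 hu i).mul (hasDerivAt_pi.1 hw i)
  rw [_root_.dotProduct, _root_.dotProduct, ← Finset.sum_add_distrib]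
  exact h

theorem HasDerivAt.mulVec {u : ℝ → ι → ℝ} {u' : ι → ℝ} {t : ℝ} (P : Matrix m ι ℝ)
    (hu : HasDerivAt u u' t) : HasDerivAt (fun s => P *ᵥ u s) (P *ᵥ u') t :=
  hasDerivAt_pi.2 fun i =>
    HasDerivAt.fun_sum fun j _ => (hasDerivAt_pi.1 hu j).const_mul (P i j)

theorem dotProduct_mulVec_eq_dotProduct_transpose_mulVec (P : Matrix ι ι ℝ) (u w : ι → ℝ) :
    u ⬝ᵥ P *ᵥ w = w ⬝ᵥ Pᵀ *ᵥ u := by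
  rw [dotProduct_mulVec, dotProduct_comm, mulVec_transpose]

theorem HasDerivAt.dotProduct_mulVec_self {u : ℝ → ι → ℝ} {u' : ι → ℝ} {t : ℝ}
    {P : Matrix ι ι ℝ} (hP : Pᵀ = P) (hu : HasDerivAt u u' t) :
    HasDerivAt (fun s => u s ⬝ᵥ P *ᵥ u s) (2 * (u t ⬝ᵥ P *ᵥ u')) t := by
  convert hu.dotProduct (hu.mulVec P) using 1
  rw [dotProduct_mulVec_eq_dotProduct_transpose_mulVec, hP]
  ring

theorem Matrix.PosDef.dotProduct_inv_mulVec_mulVec_le [DecidableEq ι]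
    {Q B : Matrix ι ι ℝ} {α : ℝ} (hQ : Q.PosDef)
    (hB : (-(B * Q + Q * Bᵀ + (2 * α) • Q)).PosSemidef) (y : ι → ℝ) :
    y ⬝ᵥ Q⁻¹ *ᵥ (B *ᵥ y) ≤ -α * (y ⬝ᵥ Q⁻¹ *ᵥ y) := by
  set z := Q⁻¹ *ᵥ y
  have hy : y = Q *ᵥ z := by
    rw [mulVec_mulVec, mul_nonsing_inv _ ((isUnit_iff_isUnit_det Q).1 hQ.isUnit), one_mulVec]
  have hQsym : Qᵀ = Q := hQ.isHermitian
  have hQinv : Q⁻¹ᵀ = Q⁻¹ := hQ.inv.isHermitian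
  have hBQ : y ⬝ᵥ Q⁻¹ *ᵥ (B *ᵥ y) = z ⬝ᵥ (B * Q) *ᵥ z := by
    rw [dotProduct_mulVec_eq_dotProduct_transpose_mulVec, hQinv, dotProduct_comm,
      ← mulVec_mulVec, ← hy]
  have hQB : z ⬝ᵥ (Q * Bᵀ) *ᵥ z = z ⬝ᵥ (B * Q) *ᵥ z := by
    rw [dotProduct_mulVec_eq_dotProduct_transpose_mulVec, transpose_mul, transpose_transpose,
      hQsym]
  have hQQ : y ⬝ᵥ Q⁻¹ *ᵥ y = z ⬝ᵥ Q *ᵥ z := by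
    rw [← hy, dotProduct_comm]
  have h := hB.dotProduct_mulVec_nonneg z
  simp only [star_trivial, neg_mulVec, add_mulVec, smul_mulVec, dotProduct_neg, dotProduct_add,
    dotProduct_smul, smul_eq_mul] at h
  rw [hBQ, hQQ]
  linarith

theorem dotProduct_mulVec_mulVec_le_of_mem_convexHull {P A : Matrix ι ι ℝ}
    {s : Set (Matrix ι ι ℝ)} {y : ι → ℝ} {c : ℝ}
    (hs : ∀ B ∈ s, y ⬝ᵥ P *ᵥ (B *ᵥ y) ≤ c) (hA : A ∈ convexHull ℝ s) :
    y ⬝ᵥ P *ᵥ (A *ᵥ y) ≤ c := by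
  have hlin : IsLinearMap ℝ fun B : Matrix ι ι ℝ => y ⬝ᵥ P *ᵥ (B *ᵥ y) :=
    ⟨fun B C => by simp only [add_mulVec, mulVec_add, dotProduct_add],
      fun a B => by simp only [smul_mulVec, mulVec_smul, dotProduct_smul]⟩
  exact convexHull_min hs (convex_halfSpace_le hlin c) hA

end

theorem le_exp_mul_of_hasDerivAt_le_mul {f f' : ℝ → ℝ} {K t : ℝ}
    (hf : ∀ s, HasDerivAt f (f' s) s) (bound : ∀ s, f' s ≤ K * f s) (ht : 0 ≤ t) :
    f t ≤ Real.exp (K * t) * f 0 := by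
  have hslope : ∀ s, ∀ r, f' s < r → ∃ᶠ z in 𝓝[>] s, (z - s)⁻¹ * (f z - f s) < r :=
    fun s r hr => ((hf s).hasDerivWithinAt.liminf_right_slope_le hr).mono fun z hz => by
      rwa [slope_def_module] at hz
  have hgronwall := le_gronwallBound_of_liminf_deriv_right_le (ε := 0)
    (fun s _ => (hf s).continuousAt.continuousWithinAt) (fun s _ => hslope s) le_rfl
    (fun s _ => by simpa using bound s) t ⟨ht, le_rfl⟩
  simpa [gronwallBound_ε0, mul_comm] using hgronwall

theorem pldi_quad_invariance_general (n N : ℕ)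
    (Q : Matrix (Fin n) (Fin n) ℝ) (hQ : Q.PosDef)
    (α₀ : ℝ) (hα₀ : 0 < α₀)
    (As : Fin N → Matrix (Fin n) (Fin n) ℝ)
    (hLMI : ∀ i : Fin N, (-(As i * Q + Q * (As i)ᵀ + (2 * α₀) • Q)).PosSemidef)
    (A : ℝ → Matrix (Fin n) (Fin n) ℝ)
    (hA : ∀ t : ℝ, A t ∈ convexHull ℝ (Set.range As))
    (x : ℝ → (Fin n → ℝ))
    (hx : ∀ t : ℝ, HasDerivAt x ((A t).mulVec (x t)) t) :
    (∀ t : ℝ, 0 ≤ t → quadNorm Q (x t) ≤ Real.exp (-α₀ * t) * quadNorm Q (x 0)) ∧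
    (quadNorm Q (x 0) ≤ 1 → ∀ t : ℝ, 0 ≤ t → quadNorm Q (x t) ≤ 1) := by
  set V := fun s => x s ⬝ᵥ Q⁻¹ *ᵥ x s
  have hV : ∀ s, HasDerivAt V (2 * (x s ⬝ᵥ Q⁻¹ *ᵥ (A s *ᵥ x s))) s := fun s =>
    (hx s).dotProduct_mulVec_self hQ.inv.isHermitian
  have hdecay : ∀ s, 2 * (x s ⬝ᵥ Q⁻¹ *ᵥ (A s *ᵥ x s)) ≤ -(2 * α₀) * V s := fun s => by
    have hhull := dotProduct_mulVec_mulVec_le_of_mem_convexHull (by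
      rintro _ ⟨i, rfl⟩
      exact hQ.dotProduct_inv_mulVec_mulVec_le (hLMI i) (x s)) (hA s)
    linarith
  have hquad (t : ℝ) (ht : 0 ≤ t) : quadNorm Q (x t) ≤ Real.exp (-α₀ * t) * quadNorm Q (x 0) :=
    calc √(V t) ≤ √(Real.exp (-(2 * α₀) * t) * V 0) :=
          Real.sqrt_le_sqrt (le_exp_mul_of_hasDerivAt_le_mul hV hdecay ht)
      _ = Real.exp (-α₀ * t) * √(V 0) := by
          rw [Real.sqrt_mul (Real.exp_nonneg _), ← Real.exp_half]
          ring_nf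
  refine ⟨hquad, fun h0 t ht => (hquad t ht).trans ?_⟩
  exact mul_le_one₀ (Real.exp_le_one_iff.2 (by nlinarith)) (Real.sqrt_nonneg _) h0

/-- if all vertex matrices of a polytopic linear differential inclusion satisfy
`A_i Q + Q A_iᵀ + 2α₀ Q ⪯ 0`, then along any trajectory `x' = A(t) x` with
`A(t) ∈ Co{A_1, …, A_N}` we have `‖x(t)‖_q ≤ e^{-α₀ t} ‖x(0)‖_q`; in particular the
unit ball of `‖·‖_q` is forward invariant. -/
theorem pldi_quad_invariance (n N : ℕ) (hN : 0 < N)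
    (Q : Matrix (Fin n) (Fin n) ℝ) (hQ : Q.PosDef)
    (α₀ : ℝ) (hα₀ : 0 < α₀)
    (As : Fin N → Matrix (Fin n) (Fin n) ℝ)
    (hLMI : ∀ i : Fin N, (-(As i * Q + Q * (As i)ᵀ + (2 * α₀) • Q)).PosSemidef)
    (A : ℝ → Matrix (Fin n) (Fin n) ℝ)
    (hA : ∀ t : ℝ, A t ∈ convexHull ℝ (Set.range As))
    (x : ℝ → (Fin n → ℝ))
    (hx : ∀ t : ℝ, HasDerivAt x ((A t).mulVec (x t)) t) :
    (∀ t : ℝ, 0 ≤ t → quadNorm Q (x t) ≤ Real.exp (-α₀ * t) * quadNorm Q (x 0)) ∧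
    (quadNorm Q (x 0) ≤ 1 → ∀ t : ℝ, 0 ≤ t → quadNorm Q (x t) ≤ 1) :=
  pldi_quad_invariance_general n N Q hQ α₀ hα₀ As hLMI A hA x hx
end
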